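/- Let (u, θ) be a smooth solution of the 1D thermoelasticity system with θ > 0, on (0,∞)×(a,b) with the given boundary conditions, and let τ = log θ. Then for all t > 0, ∫_a^b τ(t) dx = ∫₀ᵗ ∫_a^b τ_x² dx ds + ∫_a^b τ(0) dx, and combining with energy conservation, ∫₀^∞ ∫_a^b τ_x² dx dt ≤ (1/2)∫_a^b u_t(0)² dx + (1/2)∫_a^b u_x(0)² dx + ∫_a^b θ(0) dx - ∫_a^b log θ(0) dx < ∞; i.e., τ_x ∈ L²((0,∞)×(a,b)). -/

import Mathlib

open MeasureTheory Function intervalIntegral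

/-- Partial derivative in time (first variable). -/
noncomputable def pt (f : ℝ → ℝ → ℝ) : ℝ → ℝ → ℝ := fun t x => deriv (fun s => f s x) t

/-- Partial derivative in space (second variable). -/
noncomputable def px (f : ℝ → ℝ → ℝ) : ℝ → ℝ → ℝ := fun t x => deriv (fun y => f t y) x


section helpers
variable {f : ℝ → ℝ → ℝ}

lemma hasDerivAt_pt (hf : ContDiff ℝ (⊤ : ℕ∞) (uncurry f)) (t x : ℝ) :
    HasDerivAt (fun s => f s x) (pt f t x) t := by
  have h1 : DifferentiableAt ℝ (fun s => f s x) t := by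
    have := (hf.differentiable (by simp) (t, x)).comp t
      (((differentiable_id (𝕜 := ℝ) (E := ℝ)).prodMk (differentiable_const x)) t)
    exact this
  exact h1.hasDerivAt

lemma hasDerivAt_px (hf : ContDiff ℝ (⊤ : ℕ∞) (uncurry f)) (t x : ℝ) :
    HasDerivAt (fun y => f t y) (px f t x) x := by
  have h1 : DifferentiableAt ℝ (fun y => f t y) x := by
    have := (hf.differentiable (by simp) (t, x)).comp x
      (((differentiable_const t).prodMk differentiable_id) x)
    exact this
  exact h1.hasDerivAt

lemma pt_eq_fderiv (hf : ContDiff ℝ (⊤ : ℕ∞) (uncurry f)) (t x : ℝ) :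
    pt f t x = fderiv ℝ (uncurry f) (t, x) (1, 0) := by
  have h : HasDerivAt (fun s => f s x)
      (fderiv ℝ (uncurry f) (t, x) (1, 0)) t := by
    have hd : HasDerivAt (fun s : ℝ => (s, x)) ((1 : ℝ), (0 : ℝ)) t :=
      (hasDerivAt_id t).prodMk (hasDerivAt_const t x)
    exact ((hf.differentiable (by simp) (t, x)).hasFDerivAt.comp_hasDerivAt t hd)
  exact h.deriv

lemma px_eq_fderiv (hf : ContDiff ℝ (⊤ : ℕ∞) (uncurry f)) (t x : ℝ) :
    px f t x = fderiv ℝ (uncurry f) (t, x) (0, 1) := by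
  have h : HasDerivAt (fun y => f t y)
      (fderiv ℝ (uncurry f) (t, x) (0, 1)) x := by
    have hd : HasDerivAt (fun y : ℝ => (t, y)) ((0 : ℝ), (1 : ℝ)) x :=
      (hasDerivAt_const x t).prodMk (hasDerivAt_id x)
    exact ((hf.differentiable (by simp) (t, x)).hasFDerivAt.comp_hasDerivAt x hd)
  exact h.deriv

lemma contDiff_pt (hf : ContDiff ℝ (⊤ : ℕ∞) (uncurry f)) : ContDiff ℝ (⊤ : ℕ∞) (uncurry (pt f)) := by
  have : uncurry (pt f) = fun p : ℝ × ℝ => fderiv ℝ (uncurry f) p (1, 0) := by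
    funext p
    exact pt_eq_fderiv hf p.1 p.2
  rw [this]
  exact (hf.fderiv_right (by simp)).clm_apply contDiff_const

lemma contDiff_px (hf : ContDiff ℝ (⊤ : ℕ∞) (uncurry f)) : ContDiff ℝ (⊤ : ℕ∞) (uncurry (px f)) := by
  have : uncurry (px f) = fun p : ℝ × ℝ => fderiv ℝ (uncurry f) p (0, 1) := by
    funext p
    exact px_eq_fderiv hf p.1 p.2
  rw [this]
  exact (hf.fderiv_right (by simp)).clm_apply contDiff_const

end helpers

section helpers2
variable {f : ℝ → ℝ → ℝ}

lemma fderiv_fderiv_apply (hf : ContDiff ℝ (⊤ : ℕ∞) (uncurry f)) (q : ℝ × ℝ) (v w : ℝ × ℝ) :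
    fderiv ℝ (fun p => fderiv ℝ (uncurry f) p v) q w =
      fderiv ℝ (fderiv ℝ (uncurry f)) q w v := by
  have hc : HasFDerivAt (fderiv ℝ (uncurry f))
      (fderiv ℝ (fderiv ℝ (uncurry f)) q) q :=
    ((hf.fderiv_right (m := (⊤ : ℕ∞)) (by simp)).differentiable (by simp) q).hasFDerivAt
  have h := hc.clm_apply (hasFDerivAt_const v q)
  simp only [ContinuousLinearMap.comp_zero, zero_add] at h
  rw [h.fderiv]
  rfl

lemma pt_px_comm (hf : ContDiff ℝ (⊤ : ℕ∞) (uncurry f)) (t x : ℝ) :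
    pt (px f) t x = px (pt f) t x := by
  have hdf : ∀ p : ℝ × ℝ, HasFDerivAt (uncurry f) (fderiv ℝ (uncurry f) p) p :=
    fun p => (hf.differentiable (by simp) p).hasFDerivAt
  have hdf2 : HasFDerivAt (fderiv ℝ (uncurry f))
      (fderiv ℝ (fderiv ℝ (uncurry f)) (t, x)) (t, x) :=
    ((hf.fderiv_right (m := (⊤ : ℕ∞)) (by simp)).differentiable (by simp) (t, x)).hasFDerivAt
  have hsymm := second_derivative_symmetric hdf hdf2 ((1 : ℝ), (0 : ℝ)) ((0 : ℝ), (1 : ℝ))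
  have h1 : pt (px f) t x = fderiv ℝ (fderiv ℝ (uncurry f)) (t, x) (1, 0) (0, 1) := by
    rw [pt_eq_fderiv (contDiff_px hf)]
    have he : uncurry (px f) = fun p : ℝ × ℝ => fderiv ℝ (uncurry f) p ((0 : ℝ), (1 : ℝ)) := by
      funext p; exact px_eq_fderiv hf p.1 p.2
    rw [he, fderiv_fderiv_apply hf]
  have h2 : px (pt f) t x = fderiv ℝ (fderiv ℝ (uncurry f)) (t, x) (0, 1) (1, 0) := by
    rw [px_eq_fderiv (contDiff_pt hf)]
    have he : uncurry (pt f) = fun p : ℝ × ℝ => fderiv ℝ (uncurry f) p ((1 : ℝ), (0 : ℝ)) := by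
      funext p; exact pt_eq_fderiv hf p.1 p.2
    rw [he, fderiv_fderiv_apply hf]
  rw [h1, h2, hsymm]

end helpers2

section param
variable {g : ℝ → ℝ → ℝ}

lemma cont_slice (hg : ContDiff ℝ (⊤ : ℕ∞) (uncurry g)) (t : ℝ) : Continuous (g t) :=
  hg.continuous.comp (Continuous.prodMk_right t)

lemma hasDerivAt_param (hg : ContDiff ℝ (⊤ : ℕ∞) (uncurry g)) (a b t₀ : ℝ) :
    HasDerivAt (fun t => ∫ x in a..b, g t x) (∫ x in a..b, pt g t₀ x) t₀ := by
  have hK : IsCompact (Set.Icc (t₀ - 1) (t₀ + 1) ×ˢ Set.uIcc a b) :=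
    isCompact_Icc.prod isCompact_uIcc
  obtain ⟨C, hC⟩ := hK.exists_bound_of_continuousOn (contDiff_pt hg).continuous.continuousOn
  have key := intervalIntegral.hasDerivAt_integral_of_dominated_loc_of_deriv_le
    (F := fun t x => g t x) (F' := fun t x => pt g t x) (x₀ := t₀)
    (bound := fun _ => C) (a := a) (b := b) (μ := volume) (s := Metric.ball t₀ 1) (Metric.ball_mem_nhds t₀ one_pos)
    (Filter.Eventually.of_forall fun t => (cont_slice hg t).aestronglyMeasurable)
    ((cont_slice hg t₀).intervalIntegrable a b)
    ((cont_slice (contDiff_pt hg) t₀).aestronglyMeasurable)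
    (Filter.Eventually.of_forall fun x hx t ht => by
      have hx' : x ∈ Set.uIcc a b := Set.uIoc_subset_uIcc hx
      have ht' : t ∈ Set.Icc (t₀ - 1) (t₀ + 1) := by
        have := Metric.mem_ball.mp ht
        rw [Real.dist_eq] at this
        have h2 := abs_lt.mp this
        constructor <;> [linarith [h2.1]; linarith [h2.2]]
      exact hC (t, x) (Set.mk_mem_prod ht' hx'))
    (intervalIntegrable_const)
    (Filter.Eventually.of_forall fun x _ t _ => hasDerivAt_pt hg t x)
  exact key.2

end param

section aux3
variable {f : ℝ → ℝ → ℝ}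

lemma ftc_x (hf : ContDiff ℝ (⊤ : ℕ∞) (uncurry f)) (t a b : ℝ) :
    (∫ x in a..b, px f t x) = f t b - f t a :=
  intervalIntegral.integral_eq_sub_of_hasDerivAt (fun x _ => hasDerivAt_px hf t x)
    ((cont_slice (contDiff_px hf) t).intervalIntegrable a b)

lemma pt_boundary_zero {c : ℝ} (h : ∀ s ≥ (0 : ℝ), f s c = 0) {t : ℝ} (ht : 0 < t) :
    pt f t c = 0 := by
  have hev : (fun s => f s c) =ᶠ[nhds t] (fun _ => (0 : ℝ)) := by
    filter_upwards [isOpen_Ioi.mem_nhds ht] with s hs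
    exact h s (le_of_lt hs)
  show deriv (fun s => f s c) t = 0
  rw [hev.deriv_eq, deriv_const]

lemma iint_congr_Ioo {a b : ℝ} (hab : a ≤ b) {F G : ℝ → ℝ}
    (h : ∀ x ∈ Set.Ioo a b, F x = G x) :
    (∫ x in a..b, F x) = ∫ x in a..b, G x := by
  rw [intervalIntegral.integral_of_le hab, intervalIntegral.integral_of_le hab,
    MeasureTheory.integral_Ioc_eq_integral_Ioo, MeasureTheory.integral_Ioc_eq_integral_Ioo]
  exact setIntegral_congr_fun measurableSet_Ioo h

end aux3

theorem stmt_9 (a b μ : ℝ) (hab : a < b)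
    (u θ : ℝ → ℝ → ℝ)
    (hu : ContDiff ℝ (⊤ : ℕ∞) (Function.uncurry u)) (hθ : ContDiff ℝ (⊤ : ℕ∞) (Function.uncurry θ))
    (hpos : ∀ t x, 0 < θ t x)
    (heq1 : ∀ t > (0 : ℝ), ∀ x ∈ Set.Ioo a b,
      pt (pt u) t x - px (px u) t x = μ * px θ t x)
    (heq2 : ∀ t > (0 : ℝ), ∀ x ∈ Set.Ioo a b,
      pt θ t x - px (px θ) t x = μ * θ t x * px (pt u) t x)
    (hbc : ∀ t ≥ (0 : ℝ), u t a = 0 ∧ u t b = 0 ∧ px θ t a = 0 ∧ px θ t b = 0)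
    (τ : ℝ → ℝ → ℝ) (hτ : τ = fun t x => Real.log (θ t x)) :
    (∀ t > (0 : ℝ),
      (∫ x in a..b, τ t x) =
        (∫ s in (0 : ℝ)..t, ∫ x in a..b, (px τ s x) ^ 2) + ∫ x in a..b, τ 0 x) ∧
    IntegrableOn (fun p : ℝ × ℝ => (px τ p.1 p.2) ^ 2) (Set.Ioi 0 ×ˢ Set.Ioo a b) ∧
    (∫ t in Set.Ioi (0 : ℝ), ∫ x in a..b, (px τ t x) ^ 2) ≤
      (1 / 2) * (∫ x in a..b, (pt u 0 x) ^ 2) + (1 / 2) * (∫ x in a..b, (px u 0 x) ^ 2) +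
        (∫ x in a..b, θ 0 x) - ∫ x in a..b, Real.log (θ 0 x) := by
  have hne : ∀ t x, θ t x ≠ 0 := fun t x => (hpos t x).ne'
  -- smoothness of τ
  have hτs : ContDiff ℝ (⊤ : ℕ∞) (uncurry τ) := by
    rw [hτ]
    exact contDiff_iff_contDiffAt.2 fun p =>
      ContDiffAt.log hθ.contDiffAt (hne p.1 p.2)
  -- derivative formulas for τ
  have hpxτ : ∀ t x, px τ t x = px θ t x / θ t x := by
    intro t x
    have h : HasDerivAt (fun y => τ t y) (px θ t x / θ t x) x := by
      simp only [hτ]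
      exact (hasDerivAt_px hθ t x).log (hne t x)
    exact h.deriv
  have hptτ : ∀ t x, pt τ t x = pt θ t x / θ t x := by
    intro t x
    have h : HasDerivAt (fun s => τ s x) (pt θ t x / θ t x) t := by
      simp only [hτ]
      exact (hasDerivAt_pt hθ t x).log (hne t x)
    exact h.deriv
  have hpxpxτ : ∀ t x, px (px τ) t x =
      (px (px θ) t x * θ t x - px θ t x * px θ t x) / θ t x ^ 2 := by
    intro t x
    have he : (fun y => px τ t y) = fun y => px θ t y / θ t y := funext fun y => hpxτ t y
    have h : HasDerivAt (fun y => px θ t y / θ t y)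
        ((px (px θ) t x * θ t x - px θ t x * px θ t x) / θ t x ^ 2) x :=
      (hasDerivAt_px (contDiff_px hθ) t x).div (hasDerivAt_px hθ t x) (hne t x)
    show deriv (fun y => px τ t y) x = _
    rw [he]
    exact h.deriv
  -- smooth integrand for G
  have hg2 : ContDiff ℝ (⊤ : ℕ∞) (uncurry (fun t x => (px τ t x) ^ 2)) :=
    (contDiff_px hτs).pow 2
  set G : ℝ → ℝ := fun s => ∫ x in a..b, (px τ s x) ^ 2 with hG
  set F : ℝ → ℝ := fun s => ∫ x in a..b, τ s x with hF
  have hFd : Differentiable ℝ F := fun s => (hasDerivAt_param hτs a b s).differentiableAt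
  have hFc : Continuous F := hFd.continuous
  have hGd : Differentiable ℝ G := fun s => (hasDerivAt_param hg2 a b s).differentiableAt
  have hGc : Continuous G := hGd.continuous
  have hGnn : ∀ s, 0 ≤ G s := fun s =>
    intervalIntegral.integral_nonneg hab.le fun x _ => sq_nonneg _
  -- derivative of F
  have hDF : ∀ t, 0 < t → HasDerivAt F (G t) t := by
    intro t ht
    have h0 := hasDerivAt_param hτs a b t
    have hkey : ∀ x ∈ Set.Ioo a b, pt τ t x =
        px (px τ) t x + (px τ t x) ^ 2 + μ * px (pt u) t x := by
      intro x hx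
      have h2 := heq2 t ht x hx
      rw [hptτ, hpxpxτ, hpxτ]
      have hθx := hne t x
      field_simp
      linear_combination (θ t x) * h2
    have hsplit : (∫ x in a..b, pt τ t x) = G t := by
      rw [iint_congr_Ioo hab.le hkey]
      have i1 : IntervalIntegrable (fun x => px (px τ) t x) volume a b :=
        (cont_slice (contDiff_px (contDiff_px hτs)) t).intervalIntegrable a b
      have i2 : IntervalIntegrable (fun x => (px τ t x) ^ 2) volume a b :=
        ((cont_slice (contDiff_px hτs) t).pow 2).intervalIntegrable a b
      have i3 : IntervalIntegrable (fun x => μ * px (pt u) t x) volume a b :=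
        ((cont_slice (contDiff_px (contDiff_pt hu)) t).const_smul μ).intervalIntegrable a b
      rw [intervalIntegral.integral_add (i1.add i2) i3, intervalIntegral.integral_add i1 i2]
      have hb1 : (∫ x in a..b, px (px τ) t x) = 0 := by
        rw [ftc_x (contDiff_px hτs) t a b, hpxτ, hpxτ,
          (hbc t ht.le).2.2.1, (hbc t ht.le).2.2.2]
        simp
      have hb2 : (∫ x in a..b, μ * px (pt u) t x) = 0 := by
        rw [intervalIntegral.integral_const_mul, ftc_x (contDiff_pt hu) t a b,
          pt_boundary_zero (fun s hs => (hbc s hs).1) ht,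
          pt_boundary_zero (fun s hs => (hbc s hs).2.1) ht]
        simp
      rw [hb1, hb2]
      ring
    rwa [hsplit] at h0
  -- Part 1
  have part1 : ∀ t > (0 : ℝ), F t = (∫ s in (0 : ℝ)..t, G s) + F 0 := by
    intro t ht
    have h := intervalIntegral.integral_eq_sub_of_hasDeriv_right_of_le ht.le
      hFc.continuousOn (fun s hs => (hDF s hs.1).hasDerivWithinAt)
      (hGc.intervalIntegrable 0 t)
    linarith
  -- Energy
  set e : ℝ → ℝ → ℝ := fun t x => (pt u t x) ^ 2 / 2 + (px u t x) ^ 2 / 2 + θ t x with hedef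
  have hes : ContDiff ℝ (⊤ : ℕ∞) (uncurry e) :=
    ((((contDiff_pt hu).pow 2).div_const 2).add
      (((contDiff_px hu).pow 2).div_const 2)).add hθ
  set E : ℝ → ℝ := fun t => ∫ x in a..b, e t x with hE
  have hEd : Differentiable ℝ E := fun s => (hasDerivAt_param hes a b s).differentiableAt
  have hEc : Continuous E := hEd.continuous
  have hpte : ∀ t x, pt e t x =
      pt u t x * pt (pt u) t x + px u t x * pt (px u) t x + pt θ t x := by
    intro t x
    have h : HasDerivAt (fun s => e s x)
        (pt u t x * pt (pt u) t x + px u t x * pt (px u) t x + pt θ t x) t := by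
      have h1 : HasDerivAt (fun s => (pt u s x) ^ 2 / 2) (pt u t x * pt (pt u) t x) t := by
        have := ((hasDerivAt_pt (contDiff_pt hu) t x).fun_pow 2).div_const 2
        refine this.congr_deriv ?_
        ring
      have h2 : HasDerivAt (fun s => (px u s x) ^ 2 / 2) (px u t x * pt (px u) t x) t := by
        have := ((hasDerivAt_pt (contDiff_px hu) t x).fun_pow 2).div_const 2
        refine this.congr_deriv ?_
        ring
      exact (h1.add h2).add (hasDerivAt_pt hθ t x)
    exact h.deriv
  set w : ℝ → ℝ → ℝ := fun t x =>
    pt u t x * px u t x + μ * (pt u t x * θ t x) + px θ t x with hwdef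
  have hws : ContDiff ℝ (⊤ : ℕ∞) (uncurry w) :=
    (((contDiff_pt hu).mul (contDiff_px hu)).add
      (contDiff_const.mul ((contDiff_pt hu).mul hθ))).add (contDiff_px hθ)
  have hpxw : ∀ t x, px w t x =
      px (pt u) t x * px u t x + pt u t x * px (px u) t x +
        μ * (px (pt u) t x * θ t x + pt u t x * px θ t x) + px (px θ) t x := by
    intro t x
    have h : HasDerivAt (fun y => w t y)
        (px (pt u) t x * px u t x + pt u t x * px (px u) t x +
          μ * (px (pt u) t x * θ t x + pt u t x * px θ t x) + px (px θ) t x) x := by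
      have h1 : HasDerivAt (fun y => pt u t y * px u t y)
          (px (pt u) t x * px u t x + pt u t x * px (px u) t x) x :=
        (hasDerivAt_px (contDiff_pt hu) t x).mul (hasDerivAt_px (contDiff_px hu) t x)
      have h2 : HasDerivAt (fun y => μ * (pt u t y * θ t y))
          (μ * (px (pt u) t x * θ t x + pt u t x * px θ t x)) x :=
        ((hasDerivAt_px (contDiff_pt hu) t x).mul (hasDerivAt_px hθ t x)).const_mul μ
      exact (h1.add h2).add (hasDerivAt_px (contDiff_px hθ) t x)
    exact h.deriv
  -- energy conservation
  have hDE : ∀ t, 0 < t → HasDerivAt E 0 t := by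
    intro t ht
    have h0 := hasDerivAt_param hes a b t
    have hkey : ∀ x ∈ Set.Ioo a b, pt e t x = px w t x := by
      intro x hx
      have h1 := heq1 t ht x hx
      have h2 := heq2 t ht x hx
      have hc := pt_px_comm hu t x
      rw [hpte, hpxw]
      linear_combination (pt u t x) * h1 + h2 + (px u t x) * hc
    have hz : (∫ x in a..b, pt e t x) = 0 := by
      rw [iint_congr_Ioo hab.le hkey, ftc_x hws t a b]
      have hta := pt_boundary_zero (fun s hs => (hbc s hs).1) ht
      have htb := pt_boundary_zero (fun s hs => (hbc s hs).2.1) ht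
      simp only [hwdef, hta, htb, (hbc t ht.le).2.2.1, (hbc t ht.le).2.2.2]
      ring
    rwa [hz] at h0
  have hEconst : ∀ t > (0 : ℝ), E t = E 0 := by
    intro t ht
    have h := intervalIntegral.integral_eq_sub_of_hasDeriv_right_of_le ht.le
      hEc.continuousOn (fun s hs => (hDE s hs.1).hasDerivWithinAt)
      (_root_.intervalIntegrable_const (c := (0 : ℝ)))
    simp only [intervalIntegral.integral_zero] at h
    linarith
  -- splitting E 0
  have hE0 : E 0 = (1 / 2) * (∫ x in a..b, (pt u 0 x) ^ 2) +
      (1 / 2) * (∫ x in a..b, (px u 0 x) ^ 2) + ∫ x in a..b, θ 0 x := by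
    have i1 : IntervalIntegrable (fun x => (pt u 0 x) ^ 2 / 2) volume a b :=
      (((cont_slice (contDiff_pt hu) 0).pow 2).div_const 2).intervalIntegrable a b
    have i2 : IntervalIntegrable (fun x => (px u 0 x) ^ 2 / 2) volume a b :=
      (((cont_slice (contDiff_px hu) 0).pow 2).div_const 2).intervalIntegrable a b
    have i3 : IntervalIntegrable (fun x => θ 0 x) volume a b :=
      (cont_slice hθ 0).intervalIntegrable a b
    show (∫ x in a..b, ((pt u 0 x) ^ 2 / 2 + (px u 0 x) ^ 2 / 2 + θ 0 x)) = _
    rw [intervalIntegral.integral_add (i1.add i2) i3, intervalIntegral.integral_add i1 i2,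
      intervalIntegral.integral_div, intervalIntegral.integral_div]
    ring
  -- the constant C
  set C : ℝ := (1 / 2) * (∫ x in a..b, (pt u 0 x) ^ 2) +
      (1 / 2) * (∫ x in a..b, (px u 0 x) ^ 2) +
      (∫ x in a..b, θ 0 x) - ∫ x in a..b, Real.log (θ 0 x) with hCdef
  have hF0 : F 0 = ∫ x in a..b, Real.log (θ 0 x) := by
    simp only [hF, hτ]
  have hbound : ∀ t > (0 : ℝ), (∫ s in (0:ℝ)..t, G s) ≤ C := by
    intro t ht
    have h1 : F t ≤ ∫ x in a..b, θ t x := by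
      apply intervalIntegral.integral_mono_on hab.le
        ((cont_slice hτs t).intervalIntegrable a b)
        ((cont_slice hθ t).intervalIntegrable a b)
      intro x _
      rw [hτ]
      have := Real.log_le_sub_one_of_pos (hpos t x)
      linarith
    have h2 : (∫ x in a..b, θ t x) ≤ E t := by
      apply intervalIntegral.integral_mono_on hab.le
        ((cont_slice hθ t).intervalIntegrable a b)
        ((cont_slice hes t).intervalIntegrable a b)
      intro x _
      have hq : 0 ≤ (pt u t x) ^ 2 / 2 + (px u t x) ^ 2 / 2 := by positivity
      show θ t x ≤ (pt u t x) ^ 2 / 2 + (px u t x) ^ 2 / 2 + θ t x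
      linarith
    have h3 := hEconst t ht
    have h4 := part1 t ht
    rw [hCdef, ← hE0, ← hF0]
    linarith
  have hC0 : 0 ≤ C := by
    have h1 : (0 : ℝ) ≤ ∫ s in (0:ℝ)..(1:ℝ), G s :=
      intervalIntegral.integral_nonneg zero_le_one fun s _ => hGnn s
    linarith [hbound 1 one_pos]
  -- lintegral bounds
  have hGm : Measurable G := hGc.measurable
  have hIocle : ∀ n : ℕ, (∫⁻ s in Set.Ioc (0:ℝ) (n:ℝ), ENNReal.ofReal (G s)) ≤
      ENNReal.ofReal C := by
    intro n
    have hint : IntegrableOn G (Set.Ioc (0:ℝ) (n:ℝ)) volume :=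
      (hGc.integrableOn_Icc).mono_set Set.Ioc_subset_Icc_self
    rw [← ofReal_integral_eq_lintegral_ofReal hint
      (Filter.Eventually.of_forall fun s => hGnn s)]
    apply ENNReal.ofReal_le_ofReal
    rcases Nat.eq_zero_or_pos n with hn | hn
    · simp [hn, hC0]
    · have hn' : (0:ℝ) < n := by exact_mod_cast hn
      rw [← intervalIntegral.integral_of_le hn'.le]
      exact hbound n hn'
  have hIoi : (∫⁻ s in Set.Ioi (0:ℝ), ENNReal.ofReal (G s)) ≤ ENNReal.ofReal C := by
    have hU : Set.Ioi (0:ℝ) = ⋃ n : ℕ, Set.Ioc (0:ℝ) (n:ℝ) := by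
      ext s
      simp only [Set.mem_Ioi, Set.mem_iUnion, Set.mem_Ioc]
      constructor
      · intro hs
        obtain ⟨n, hn⟩ := exists_nat_ge s
        exact ⟨n, hs, hn⟩
      · rintro ⟨n, hn, -⟩
        exact hn
    set ν := volume.withDensity (fun s => ENNReal.ofReal (G s)) with hν
    have hνap : ∀ s : Set ℝ, MeasurableSet s →
        ν s = ∫⁻ t in s, ENNReal.ofReal (G t) :=
      fun s hs => withDensity_apply _ hs
    have hmono : Monotone (fun n : ℕ => Set.Ioc (0:ℝ) (n:ℝ)) := fun m n hmn =>
      Set.Ioc_subset_Ioc_right (by exact_mod_cast hmn)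
    calc (∫⁻ s in Set.Ioi (0:ℝ), ENNReal.ofReal (G s)) = ν (Set.Ioi 0) :=
          (hνap _ measurableSet_Ioi).symm
      _ = ν (⋃ n : ℕ, Set.Ioc (0:ℝ) (n:ℝ)) := by rw [hU]
      _ = ⨆ n : ℕ, ν (Set.Ioc (0:ℝ) (n:ℝ)) := hmono.directed_le.measure_iUnion
      _ ≤ ENNReal.ofReal C := by
          apply iSup_le
          intro n
          rw [hνap _ measurableSet_Ioc]
          exact hIocle n
  -- inner lintegral
  have hfcont : Continuous (fun p : ℝ × ℝ => (px τ p.1 p.2) ^ 2) := hg2.continuous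
  have hinner : ∀ t : ℝ, (∫⁻ x in Set.Ioo a b, ENNReal.ofReal ((px τ t x) ^ 2)) =
      ENNReal.ofReal (G t) := by
    intro t
    have hint : IntegrableOn (fun x => (px τ t x) ^ 2) (Set.Ioo a b) volume :=
      (((cont_slice (contDiff_px hτs) t).pow 2).integrableOn_Icc).mono_set
        Set.Ioo_subset_Icc_self
    rw [← ofReal_integral_eq_lintegral_ofReal hint
      (Filter.Eventually.of_forall fun x => sq_nonneg _)]
    congr 1
    show (∫ x in Set.Ioo a b, (px τ t x) ^ 2) = ∫ x in a..b, (px τ t x) ^ 2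
    rw [intervalIntegral.integral_of_le hab.le, MeasureTheory.integral_Ioc_eq_integral_Ioo]
  have hprodl : (∫⁻ p in Set.Ioi (0:ℝ) ×ˢ Set.Ioo a b,
      ENNReal.ofReal ((px τ p.1 p.2) ^ 2)) ≤ ENNReal.ofReal C := by
    have hrw : (volume : Measure (ℝ × ℝ)).restrict (Set.Ioi (0:ℝ) ×ˢ Set.Ioo a b) =
        (volume.restrict (Set.Ioi (0:ℝ))).prod (volume.restrict (Set.Ioo a b)) := by
      rw [Measure.prod_restrict, ← Measure.volume_eq_prod]
    rw [hrw, MeasureTheory.lintegral_prod _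
      ((hfcont.measurable.ennreal_ofReal).aemeasurable)]
    calc (∫⁻ t in Set.Ioi (0:ℝ), ∫⁻ x in Set.Ioo a b,
          ENNReal.ofReal ((px τ t x) ^ 2)) =
        ∫⁻ t in Set.Ioi (0:ℝ), ENNReal.ofReal (G t) := by
          apply lintegral_congr
          intro t
          exact hinner t
      _ ≤ ENNReal.ofReal C := hIoi
  -- integrability on product
  have hint2 : IntegrableOn (fun p : ℝ × ℝ => (px τ p.1 p.2) ^ 2)
      (Set.Ioi 0 ×ˢ Set.Ioo a b) := by
    refine ⟨hfcont.aestronglyMeasurable.restrict, ?_⟩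
    rw [HasFiniteIntegral]
    have hcongr : (∫⁻ p in Set.Ioi (0:ℝ) ×ˢ Set.Ioo a b,
        (‖(px τ p.1 p.2) ^ 2‖₊ : ENNReal)) =
        ∫⁻ p in Set.Ioi (0:ℝ) ×ˢ Set.Ioo a b, ENNReal.ofReal ((px τ p.1 p.2) ^ 2) := by
      apply lintegral_congr
      intro p
      exact Real.enorm_eq_ofReal (sq_nonneg _)
    calc (∫⁻ p in Set.Ioi (0:ℝ) ×ˢ Set.Ioo a b, (‖(px τ p.1 p.2) ^ 2‖₊ : ENNReal))
        = ∫⁻ p in Set.Ioi (0:ℝ) ×ˢ Set.Ioo a b,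
            ENNReal.ofReal ((px τ p.1 p.2) ^ 2) := hcongr
      _ ≤ ENNReal.ofReal C := hprodl
      _ < ⊤ := ENNReal.ofReal_lt_top
  -- final inequality
  have hfinal : (∫ t in Set.Ioi (0:ℝ), G t) ≤ C := by
    rw [integral_eq_lintegral_of_nonneg_ae
      (Filter.Eventually.of_forall fun s => hGnn s)
      (hGc.aestronglyMeasurable.restrict)]
    exact ENNReal.toReal_le_of_le_ofReal hC0 hIoi
  refine ⟨part1, hint2, ?_⟩
  exact hfinal
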